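/- If L is piecewise-testable and L' is cofinite, then L ⧢ L' is piecewise-testable. -/

import Mathlib

/-!
Let `L` be a union of `∼ₖ`-classes. By Higman's lemma the words having no proper `∼ₖ`-equivalent
subword are finitely many, so every word has a `∼ₖ`-equivalent subword of length at most some `B`
depending only on `k`. A cofinite `L'` contains every word of length at least some `N`.
Then `L ⧢ L'` is a union of `∼_{B+N}`-classes: a word shorter than `B + N` is alone in its class,
and if `x ∈ L ⧢ L'` is longer and `x ∼_{B+N} y`, a short representative `w ∈ L` of the `L`-part
of `x` is still a subword of `y`, whose remaining `|y| - |w| ≥ N` letters form a word of `L'`.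
-/

open List

variable {A : Type*}

/-- Extract the subword of `x` at positions `K`. -/
def extractW (x : List A) (K : Finset (Fin x.length)) : List A :=
  ((List.finRange x.length).filter (fun i => i ∈ K)).map x.get

/-- `InterpW C u v x` : `x` is a shuffle of `u` and `v` with possible sharing of letters in `C`. -/
def InterpW (C : Set A) (u v x : List A) : Prop :=
  ∃ K K' : Finset (Fin x.length), K ∪ K' = Finset.univ ∧
    extractW x K = u ∧ extractW x K' = v ∧ ∀ a ∈ extractW x (K ∩ K'), a ∈ C

/-- Interpolation product of languages. -/
def interpL (C : Set A) (L L' : Set (List A)) : Set (List A) :=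
  {x | ∃ u ∈ L, ∃ v ∈ L', InterpW C u v x}

/-- Shuffle product of languages. -/
def shuffleL (L L' : Set (List A)) : Set (List A) := interpL ∅ L L'

/-- Simon's congruence: same scattered subwords of length at most `k`. -/
def SimK (k : ℕ) (u v : List A) : Prop :=
  ∀ w : List A, w.length ≤ k → (w.Sublist u ↔ w.Sublist v)

/-- Piecewise-testability: union of `∼ₖ`-classes for some `k`. -/
def PT (L : Set (List A)) : Prop :=
  ∃ k, ∀ u v : List A, SimK k u v → (u ∈ L ↔ v ∈ L)

/-- A DFA is acyclic when every cycle is a self-loop. -/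
def DFA.Acyclic {σ : Type*} (M : DFA A σ) : Prop :=
  ∀ p q (u v : List A), M.evalFrom p u = q → M.evalFrom q v = p → p = q

/-- A language is ℛ-trivial iff it is recognized by a finite acyclic DFA. -/
def RTrivial (L : Set (List A)) : Prop :=
  ∃ (σ : Type) (_ : Fintype σ) (M : DFA A σ), M.Acyclic ∧ ∀ x, x ∈ M.accepts ↔ x ∈ L

namespace SimK

variable {k : ℕ} {u v w : List A}

lemma refl (k : ℕ) (u : List A) : SimK k u u := fun _ _ => Iff.rfl

lemma symm (h : SimK k u v) : SimK k v u := fun t ht => (h t ht).symm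

lemma trans (h : SimK k u v) (h' : SimK k v w) : SimK k u w :=
  fun t ht => (h t ht).trans (h' t ht)

lemma le_length {n : ℕ} (h : SimK k u v) (hu : n ≤ u.length) (hn : n ≤ k) : n ≤ v.length := by
  have hsub : (u.take n).Sublist v :=
    (h _ (by simp only [length_take]; omega)).mp (take_sublist _ _)
  simpa [length_take, hu] using hsub.length_le

lemma eq_of_length_lt (h : SimK k u v) (hu : u.length < k) : u = v := by
  have hv : v.length < k := by
    by_contra! hv
    exact absurd (h.symm.le_length hv le_rfl) (by omega)
  exact ((h u hu.le).mp (Sublist.refl u)).antisymm ((h v hv.le).mpr (Sublist.refl v))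

end SimK

lemma wellQuasiOrdered_sublist [Finite A] : WellQuasiOrdered (fun u v : List A => u <+ v) := by
  have higman := Set.PartiallyWellOrderedOn.partiallyWellOrderedOn_sublistForall₂ (Eq : A → A → Prop)
    (Set.finite_univ.partiallyWellOrderedOn)
  intro f
  obtain ⟨m, n, hmn, hsub⟩ := higman.exists_lt (f := f) (fun _ _ _ => Set.mem_univ _)
  obtain ⟨l, hl, hsub⟩ := sublistForall₂_iff.mp hsub
  rw [forall₂_eq_eq_eq] at hl
  exact ⟨m, n, hmn, hl ▸ hsub⟩

def SimKMinimal (k : ℕ) (w : List A) : Prop :=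
  ∀ w', w' <+ w → SimK k w' w → w' = w

lemma exists_simKMinimal_sublist (k : ℕ) (u : List A) :
    ∃ w, w <+ u ∧ SimK k w u ∧ SimKMinimal k w := by
  obtain ⟨w, ⟨hwu, hw⟩, hmin⟩ := (measure List.length).wf.has_min
    {w | w <+ u ∧ SimK k w u} ⟨u, Sublist.refl u, SimK.refl k u⟩
  refine ⟨w, hwu, hw, fun w' hw'w hw' => hw'w.eq_of_length (le_antisymm hw'w.length_le ?_)⟩
  exact not_lt.mp (hmin w' ⟨hw'w.trans hwu, hw'.trans hw⟩)

/-- Minimal words in the same `∼ₖ`-class are `<+`-incomparable, so by Higman's lemma each of the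
finitely many classes contains finitely many of them. -/
lemma finite_setOf_simKMinimal [Finite A] (k : ℕ) : {w : List A | SimKMinimal k w}.Finite := by
  set shortSublists : List A → Set (List A) := fun w => {v | v.length ≤ k ∧ v <+ w}
  refine Set.Finite.of_finite_fibers shortSublists ?_ fun c _ => ?_
  · refine ((List.finite_length_le A k).finite_subsets).subset ?_
    rintro _ ⟨w, -, rfl⟩ v hv
    exact hv.1
  · refine IsAntichain.finite_of_partiallyWellOrderedOn ?_
      (Set.partiallyWellOrderedOn_of_wellQuasiOrdered wellQuasiOrdered_sublist _)
    rintro a ⟨-, hac⟩ b ⟨hb, hbc⟩ hab hsub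
    have hsim : SimK k a b := fun v hv => by
      have := congrArg (v ∈ ·) (hac.trans hbc.symm)
      simpa [shortSublists, hv] using this
    exact hab (hb a hsub hsim)

lemma exists_simK_sublist_length_le [Finite A] (k : ℕ) :
    ∃ B, ∀ u : List A, ∃ w, w <+ u ∧ SimK k w u ∧ w.length ≤ B := by
  obtain ⟨B, hB⟩ := ((finite_setOf_simKMinimal (A := A) k).image List.length).bddAbove
  refine ⟨B, fun u => ?_⟩
  obtain ⟨w, hwu, hw, hmin⟩ := exists_simKMinimal_sublist k u
  exact ⟨w, hwu, hw, hB ⟨w, hmin, rfl⟩⟩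

lemma extractW_sublist (x : List A) (K : Finset (Fin x.length)) : extractW x K <+ x := by
  simpa only [extractW, map_get_finRange] using (filter_sublist (l := finRange x.length)).map x.get

lemma length_extractW (x : List A) (K : Finset (Fin x.length)) : (extractW x K).length = K.card := by
  classical
  have hnodup := (nodup_finRange x.length).filter (fun i => decide (i ∈ K))
  rw [extractW, length_map, ← toFinset_card_of_nodup hnodup]
  congr 1
  ext i
  simp

lemma filter_finRange_mem_image {m n : ℕ} (f : Fin m ↪o Fin n) :
    (finRange n).filter (· ∈ Finset.univ.image f) = (finRange m).map f := by
  have hmap : (finRange m).map f |>.Pairwise (· < ·) :=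
    (pairwise_lt_finRange m).map f fun _ _ => f.lt_iff_lt.mpr
  refine Perm.eq_of_pairwise' ((pairwise_lt_finRange n).filter _) hmap ?_
  refine perm_of_nodup_nodup_toFinset_eq ((nodup_finRange n).filter _) (hmap.imp ne_of_lt) ?_
  ext j
  simp [eq_comm]

lemma InterpW.sublist_left {C : Set A} {u v x : List A} (h : InterpW C u v x) : u <+ x := by
  obtain ⟨K, -, -, rfl, -, -⟩ := h
  exact extractW_sublist x K

lemma exists_interpW_empty_of_sublist {u y : List A} (h : u <+ y) :
    ∃ v, v.length = y.length - u.length ∧ InterpW ∅ u v y := by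
  classical
  obtain ⟨f, hf⟩ := sublist_iff_exists_fin_orderEmbedding_get_eq.mp h
  set K := Finset.univ.image f
  have hK : extractW y K = u := by
    rw [extractW, filter_finRange_mem_image, map_map]
    have hcomp : y.get ∘ f = u.get := funext fun i => (hf i).symm
    rw [hcomp, map_get_finRange]
  refine ⟨extractW y Kᶜ, ?_, K, Kᶜ, Finset.union_compl K, hK, rfl, ?_⟩
  · rw [length_extractW, Finset.card_compl, ← length_extractW, hK, Fintype.card_fin]
  · simp [Finset.inter_compl, extractW]

lemma mem_shuffleL_of_sublist {L L' : Set (List A)} {u y : List A} (hu : u ∈ L) (huy : u <+ y)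
    (hL' : ∀ v : List A, v.length = y.length - u.length → v ∈ L') : y ∈ shuffleL L L' := by
  obtain ⟨v, hv, hinterp⟩ := exists_interpW_empty_of_sublist huy
  exact ⟨u, hu, v, hL' v hv, hinterp⟩

lemma SimK.mem_shuffleL {k B N : ℕ} {L L' : Set (List A)}
    (hL : ∀ u v, SimK k u v → (u ∈ L ↔ v ∈ L))
    (hB : ∀ u : List A, ∃ w, w <+ u ∧ SimK k w u ∧ w.length ≤ B)
    (hL' : ∀ v : List A, N ≤ v.length → v ∈ L')
    {x y : List A} (hxy : SimK (B + N) x y) (hx : x ∈ shuffleL L L') : y ∈ shuffleL L L' := by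
  by_cases hshort : x.length < B + N
  · exact hxy.eq_of_length_lt hshort ▸ hx
  obtain ⟨u, hu, v, -, hinterp⟩ := hx
  obtain ⟨w, hwu, hw, hwB⟩ := hB u
  have hwy : w <+ y := (hxy w (by omega)).mp (hwu.trans hinterp.sublist_left)
  have hy : w.length + N ≤ y.length := hxy.le_length (by omega) (by omega)
  exact mem_shuffleL_of_sublist ((hL w u hw).mpr hu) hwy fun v hv => hL' v (by omega)

lemma PT.shuffleL [Finite A] {L L' : Set (List A)} (hL : PT L) {N : ℕ}
    (hL' : ∀ v : List A, N ≤ v.length → v ∈ L') : PT (shuffleL L L') := by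
  obtain ⟨k, hk⟩ := hL
  obtain ⟨B, hB⟩ := exists_simK_sublist_length_le (A := A) k
  exact ⟨B + N, fun x y hxy => ⟨hxy.mem_shuffleL hk hB hL', hxy.symm.mem_shuffleL hk hB hL'⟩⟩

lemma exists_forall_length_le_mem_of_finite_compl {L' : Set (List A)} (hL' : (L'ᶜ).Finite) :
    ∃ N, ∀ v : List A, N ≤ v.length → v ∈ L' := by
  obtain ⟨N, hN⟩ := (hL'.image List.length).bddAbove
  refine ⟨N + 1, fun v hv => ?_⟩
  by_contra hvL'
  exact absurd (hN ⟨v, hvL', rfl⟩) (by omega)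

theorem stmt15 {A : Type*} [Fintype A] (L : Set (List A)) (hL : PT L)
    (L' : Set (List A)) (hL' : (L'ᶜ).Finite) : PT (shuffleL L L') := by
  obtain ⟨N, hN⟩ := exists_forall_length_le_mem_of_finite_compl hL'
  exact hL.shuffleL hN
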